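/- Let Z be a cyclic order on a set S with at least two elements, and let K and L be cuts of Z such that K = (L restricted to S \ S') ⊕ (L restricted to S') for some initial segment S' of L. Then the map V'(L) → V'(K) sending x ∈ S to x, an initial segment x ⊊ S' to x ∪ (S \ S'), and an initial segment x with S' ⊆ x, x ≠ S, to x \ S', is the unique isomorphism of the cyclic orders Z(L) and Z(K) that fixes S pointwise. -/
import Mathlib


def IsCyclicOrder {S : Type*} (Z : Set (S × S × S)) : Prop :=
  (∀ a b c : S, (a, b, c) ∈ Z → (b, c, a) ∈ Z) ∧
  (∀ a b c : S, (a, b, c) ∈ Z → (c, b, a) ∉ Z) ∧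
  (∀ a b c : S, a ≠ b → b ≠ c → a ≠ c → (a, b, c) ∉ Z → (c, b, a) ∈ Z) ∧
  (∀ a b c d : S, (a, b, c) ∈ Z → (a, c, d) ∈ Z → (a, b, d) ∈ Z)

/-- The closed interval `[s,t]` of a cyclic order. -/
def cycInterval {S : Type*} (Z : Set (S × S × S)) (s t : S) : Set S :=
  {s, t} ∪ {c | (s, c, t) ∈ Z}

/-- The open interval `]s,t[` of a cyclic order. -/
def cycOpen {S : Type*} (Z : Set (S × S × S)) (s t : S) : Set S :=
  {c | (s, c, t) ∈ Z}

/-- A subset `I` is an interval of the cyclic order `Z`. -/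
def IsInterval {S : Type*} (Z : Set (S × S × S)) (I : Set S) : Prop :=
  ∀ s ∈ I, ∀ t ∈ I, cycInterval Z s t ⊆ I ∨ cycInterval Z t s ⊆ I

/-- The cyclic order induced on a subset `A`. -/
def inducedCycOrder {S : Type*} (Z : Set (S × S × S)) (A : Set S) : Set (S × S × S) :=
  {p | p ∈ Z ∧ p.1 ∈ A ∧ p.2.1 ∈ A ∧ p.2.2 ∈ A}

/-- `T` (a cyclic order on the whole type `R`) is a cycle completion of the cyclic order
it induces on the subset `S`: every non-trivial interval of the induced order on `S` is
uniquely of the form `[v,w]_T ∩ S` with `v, w ∉ S`. -/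
def IsCycleCompletion {R : Type*} (T : Set (R × R × R)) (S : Set R) : Prop :=
  IsCyclicOrder T ∧
  ∀ I : Set R, I ⊆ S → IsInterval (inducedCycOrder T S) I → I.Nonempty → I ≠ S →
    ∃! vw : R × R, vw.1 ∉ S ∧ vw.2 ∉ S ∧ cycInterval T vw.1 vw.2 ∩ S = I

/-- A map between cyclically ordered sets is monotone. -/
def CycMonotone {S S' : Type*} (Z : Set (S × S × S)) (Z' : Set (S' × S' × S'))
    (f : S → S') : Prop :=
  ∀ a b c : S, (f a, f b, f c) ∈ Z' → (a, b, c) ∈ Z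

/-- `le` is a (reflexive, antisymmetric, transitive, total) linear order relation. -/
def IsLinRel {S : Type*} (le : S → S → Prop) : Prop :=
  (∀ a, le a a) ∧ (∀ a b, le a b → le b a → a = b) ∧
  (∀ a b c, le a b → le b c → le a c) ∧ (∀ a b, le a b ∨ le b a)

/-- The strict relation associated with `le`. -/
def relLt {S : Type*} (le : S → S → Prop) (a b : S) : Prop := le a b ∧ a ≠ b

/-- The cyclic order induced by a linear order relation. -/
def cycOfLin {S : Type*} (le : S → S → Prop) : Set (S × S × S) :=
  {p | (relLt le p.1 p.2.1 ∧ relLt le p.2.1 p.2.2) ∨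
       (relLt le p.2.1 p.2.2 ∧ relLt le p.2.2 p.1) ∨
       (relLt le p.2.2 p.1 ∧ relLt le p.1 p.2.1)}

/-- `le` is a cut of the cyclic order `Z`: a linear order inducing `Z`. -/
def IsCut {S : Type*} (Z : Set (S × S × S)) (le : S → S → Prop) : Prop :=
  IsLinRel le ∧ cycOfLin le = Z

/-- An initial segment of the relation `le`. -/
def RInitSeg {S : Type*} (le : S → S → Prop) (A : Set S) : Prop :=
  ∀ s ∈ A, ∀ t, le t s → t ∈ A

/-- The ground set `V'(L) = S ∪ (V(L) \ {S})` of the completed linear order,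
inside the ambient type `S ⊕ Set S`. -/
def Vprime {S : Type*} (le : S → S → Prop) : Set (S ⊕ Set S) :=
  Set.range Sum.inl ∪ {x | ∃ A : Set S, RInitSeg le A ∧ A ≠ Set.univ ∧ x = Sum.inr A}

/-- The linear order `D'(L)` interleaving `S` with its initial segments. -/
def Dple {S : Type*} (le : S → S → Prop) : S ⊕ Set S → S ⊕ Set S → Prop
  | Sum.inl x, Sum.inl y => le x y
  | Sum.inr A, Sum.inr B => A ⊆ B
  | Sum.inl x, Sum.inr A => x ∈ A
  | Sum.inr A, Sum.inl x => x ∉ A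

/-- The cyclic order `Z(L)` on `V'(L)` induced by `D'(L)`. -/
def ZL {S : Type*} (le : S → S → Prop) :
    Set ((S ⊕ Set S) × (S ⊕ Set S) × (S ⊕ Set S)) :=
  inducedCycOrder (cycOfLin (Dple le)) (Vprime le)

open Classical in
/-- The candidate isomorphism `V'(L) → V'(K)`: it fixes `S`, sends an initial segment
`A ⊊ S'` to `A ∪ (S \ S')`, and an initial segment `A ⊇ S'` to `A \ S'`. -/
noncomputable def gmap {S : Type*} (S' : Set S) : S ⊕ Set S → S ⊕ Set S
  | Sum.inl s => Sum.inl s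
  | Sum.inr A => Sum.inr (if A ⊆ S' ∧ A ≠ S' then A ∪ S'ᶜ else A \ S')


/-! ### Auxiliary lemmas -/

section Aux12

variable {S : Type*}

open Classical in
/-- The set-level action of `gmap`. -/
noncomputable def gset (S' A : Set S) : Set S :=
  if A ⊆ S' ∧ A ≠ S' then A ∪ S'ᶜ else A \ S'

lemma gmap_inl (S' : Set S) (s : S) : gmap S' (Sum.inl s) = Sum.inl s := rfl

lemma gmap_inr (S' A : Set S) : gmap S' (Sum.inr A) = Sum.inr (gset S' A) := rfl

/-- Low part of `V'(L)` (the part before the cut at `S'`). -/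
def lowp (S' : Set S) : S ⊕ Set S → Prop
  | Sum.inl s => s ∈ S'
  | Sum.inr A => A ⊆ S' ∧ A ≠ S'

lemma inl_mem_Vprime {le : S → S → Prop} (s : S) : Sum.inl s ∈ Vprime le :=
  Or.inl ⟨s, rfl⟩

lemma inr_mem_Vprime {le : S → S → Prop} {A : Set S} (h : RInitSeg le A)
    (h' : A ≠ Set.univ) : Sum.inr A ∈ Vprime le :=
  Or.inr ⟨A, h, h', rfl⟩

lemma inr_mem_Vprime_iff {le : S → S → Prop} {A : Set S} :
    Sum.inr A ∈ Vprime le ↔ RInitSeg le A ∧ A ≠ Set.univ := by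
  constructor
  · rintro (⟨s, hs⟩ | ⟨B, h1, h2, h3⟩)
    · exact absurd hs (by simp)
    · rw [Sum.inr.injEq] at h3
      exact h3 ▸ ⟨h1, h2⟩
  · rintro ⟨h, h'⟩; exact inr_mem_Vprime h h'

lemma initseg_total {le : S → S → Prop} (hle : IsLinRel le) {A B : Set S}
    (hA : RInitSeg le A) (hB : RInitSeg le B) : A ⊆ B ∨ B ⊆ A := by
  by_cases h : A ⊆ B
  · exact Or.inl h
  · right
    obtain ⟨a, haA, haB⟩ := Set.not_subset.mp h
    intro b hb
    rcases hle.2.2.2 a b with h' | h'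
    · exact absurd (hB b hb a h') haB
    · exact hA a haA b h'

lemma lowp_dc {lL : S → S → Prop} (hL : IsLinRel lL) {S' : Set S} (hS' : RInitSeg lL S')
    {u v : S ⊕ Set S} (hu : u ∈ Vprime lL) (hv : v ∈ Vprime lL)
    (huv : Dple lL u v) (hpv : lowp S' v) : lowp S' u := by
  rcases u with s | A <;> rcases v with t | B
  · exact hS' t hpv s huv
  · exact hpv.1 huv
  · obtain ⟨hA, -⟩ := inr_mem_Vprime_iff.mp hu
    rcases initseg_total hL hA hS' with h | h
    · exact ⟨h, fun he => huv (he ▸ hpv)⟩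
    · exact absurd (h hpv) huv
  · obtain ⟨hA, -⟩ := inr_mem_Vprime_iff.mp hu
    exact ⟨(huv : A ⊆ B).trans hpv.1,
      fun he => hpv.2 (subset_antisymm hpv.1 (he ▸ (huv : A ⊆ B)))⟩

lemma Dple_total {lL : S → S → Prop} (hL : IsLinRel lL) {u v : S ⊕ Set S}
    (hu : u ∈ Vprime lL) (hv : v ∈ Vprime lL) : Dple lL u v ∨ Dple lL v u := by
  rcases u with s | A <;> rcases v with t | B
  · exact hL.2.2.2 s t
  · exact (em (s ∈ B)).imp id id
  · exact (em (t ∈ A)).symm.imp id id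
  · exact initseg_total hL (inr_mem_Vprime_iff.mp hu).1 (inr_mem_Vprime_iff.mp hv).1

lemma rot_cyc {α : Type*} (le : α → α → Prop) (p : α → Prop) (a b c : α)
    (tab : le a b ∨ le b a) (tbc : le b c ∨ le c b) (tac : le a c ∨ le c a)
    (hpab : le a b → p b → p a) (hpba : le b a → p a → p b)
    (hpbc : le b c → p c → p b) (hpcb : le c b → p b → p c)
    (hpac : le a c → p c → p a) (hpca : le c a → p a → p c) :
    ((a,b,c) ∈ cycOfLin le ↔
      (a,b,c) ∈ cycOfLin (fun u v => (¬ p u ∧ p v) ∨ ((p u ↔ p v) ∧ le u v))) := by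
  simp only [cycOfLin, relLt, Set.mem_setOf_eq]
  by_cases pa : p a <;> by_cases pb : p b <;> by_cases pc : p c
  · simp [pa, pb, pc]
  · have h1 : ¬ le c a := fun h => pc (hpca h pa)
    have h2 : le a c := tac.resolve_right h1
    have h3 : ¬ le c b := fun h => pc (hpcb h pb)
    have h4 : le b c := tbc.resolve_right h3
    have n1 : a ≠ c := fun h => pc (h ▸ pa)
    have n2 : b ≠ c := fun h => pc (h ▸ pb)
    simp [pa, pb, pc, h1, h2, h3, h4, n1, n2, n1.symm, n2.symm]
  · have h1 : ¬ le b a := fun h => pb (hpba h pa)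
    have h2 : le a b := tab.resolve_right h1
    have h3 : ¬ le b c := fun h => pb (hpbc h pc)
    have h4 : le c b := tbc.resolve_left h3
    have n1 : a ≠ b := fun h => pb (h ▸ pa)
    have n2 : c ≠ b := fun h => pb (h ▸ pc)
    simp [pa, pb, pc, h1, h2, h3, h4, n1, n2, n1.symm, n2.symm]
  · have h1 : ¬ le b a := fun h => pb (hpba h pa)
    have h2 : le a b := tab.resolve_right h1
    have h3 : ¬ le c a := fun h => pc (hpca h pa)
    have h4 : le a c := tac.resolve_right h3
    have n1 : a ≠ b := fun h => pb (h ▸ pa)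
    have n2 : a ≠ c := fun h => pc (h ▸ pa)
    simp [pa, pb, pc, h1, h2, h3, h4, n1, n2, n1.symm, n2.symm]
  · have h1 : ¬ le a b := fun h => pa (hpab h pb)
    have h2 : le b a := tab.resolve_left h1
    have h3 : ¬ le a c := fun h => pa (hpac h pc)
    have h4 : le c a := tac.resolve_left h3
    have n1 : b ≠ a := fun h => pa (h ▸ pb)
    have n2 : c ≠ a := fun h => pa (h ▸ pc)
    simp [pa, pb, pc, h1, h2, h3, h4, n1, n2, n1.symm, n2.symm]
  · have h1 : ¬ le a b := fun h => pa (hpab h pb)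
    have h2 : le b a := tab.resolve_left h1
    have h3 : ¬ le c b := fun h => pc (hpcb h pb)
    have h4 : le b c := tbc.resolve_right h3
    have n1 : b ≠ a := fun h => pa (h ▸ pb)
    have n2 : b ≠ c := fun h => pc (h ▸ pb)
    simp [pa, pb, pc, h1, h2, h3, h4, n1, n2, n1.symm, n2.symm]
  · have h1 : ¬ le a c := fun h => pa (hpac h pc)
    have h2 : le c a := tac.resolve_left h1
    have h3 : ¬ le b c := fun h => pb (hpbc h pc)
    have h4 : le c b := tbc.resolve_left h3
    have n1 : c ≠ a := fun h => pa (h ▸ pc)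
    have n2 : c ≠ b := fun h => pb (h ▸ pc)
    simp [pa, pb, pc, h1, h2, h3, h4, n1, n2, n1.symm, n2.symm]
  · simp [pa, pb, pc]

variable {lL lK : S → S → Prop} {S' : Set S}

lemma gset_cases (hLlin : IsLinRel lL) (hS' : RInitSeg lL S') {A : Set S}
    (hA : RInitSeg lL A) :
    (A ⊆ S' ∧ A ≠ S' ∧ gset S' A = A ∪ S'ᶜ) ∨
      (S' ⊆ A ∧ ¬(A ⊆ S' ∧ A ≠ S') ∧ gset S' A = A \ S') := by
  by_cases h : A ⊆ S' ∧ A ≠ S'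
  · exact Or.inl ⟨h.1, h.2, if_pos h⟩
  · right
    have hsub : S' ⊆ A := by
      rcases initseg_total hLlin hA hS' with h' | h'
      · have hAe : A = S' := by
          by_contra hne
          exact h ⟨h', hne⟩
        rw [hAe]
      · exact h'
    exact ⟨hsub, h, if_neg h⟩

lemma gset_mem (hLlin : IsLinRel lL) (hS' : RInitSeg lL S')
    (hKdef : ∀ x y, lK x y ↔ ((x ∉ S' ∧ y ∈ S') ∨ ((x ∈ S' ↔ y ∈ S') ∧ lL x y)))
    {A : Set S} (hA : RInitSeg lL A) (hAne : A ≠ Set.univ) :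
    RInitSeg lK (gset S' A) ∧ gset S' A ≠ Set.univ := by
  rcases gset_cases hLlin hS' hA with ⟨hsub, hne, hgs⟩ | ⟨hsub, hnot, hgs⟩ <;> rw [hgs]
  · constructor
    · intro x hx t ht
      rcases (hKdef t x).mp ht with ⟨h1, h2⟩ | ⟨h1, h2⟩
      · exact Or.inr h1
      · rcases hx with hx | hx
        · exact Or.inl (hA x hx t h2)
        · exact Or.inr (fun hts => hx (h1.mp hts))
    · intro he
      have h2 : S' ⊆ A := fun x hx =>
        ((he ▸ Set.mem_univ x : x ∈ A ∪ S'ᶜ).resolve_right (fun h => h hx))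
      exact hne (subset_antisymm hsub h2)
  · constructor
    · rintro x ⟨hxA, hxS⟩ t ht
      rcases (hKdef t x).mp ht with ⟨h1, h2⟩ | ⟨h1, h2⟩
      · exact absurd h2 hxS
      · exact ⟨hA x hxA t h2, fun hts => hxS (h1.mp hts)⟩
    · intro he
      apply hAne
      apply Set.eq_univ_of_univ_subset
      rw [← he]
      exact Set.diff_subset

lemma dple_gmap_iff (hLlin : IsLinRel lL) (hS' : RInitSeg lL S')
    (hKdef : ∀ x y, lK x y ↔ ((x ∉ S' ∧ y ∈ S') ∨ ((x ∈ S' ↔ y ∈ S') ∧ lL x y)))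
    {u v : S ⊕ Set S} (hu : u ∈ Vprime lL) (hv : v ∈ Vprime lL) :
    Dple lK (gmap S' u) (gmap S' v) ↔
      ((¬ lowp S' u ∧ lowp S' v) ∨ ((lowp S' u ↔ lowp S' v) ∧ Dple lL u v)) := by
  rcases u with s | A <;> rcases v with t | B
  · exact hKdef s t
  · -- inl s, inr B
    obtain ⟨hB, hBne⟩ := inr_mem_Vprime_iff.mp hv
    rw [gmap_inl, gmap_inr]
    rcases gset_cases hLlin hS' hB with ⟨hsub, hne, hgs⟩ | ⟨hsub, hnot, hgs⟩ <;> rw [hgs]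
    · have hl : lowp S' (Sum.inr B) := ⟨hsub, hne⟩
      show s ∈ B ∪ S'ᶜ ↔ _
      constructor
      · rintro (hs | hs)
        · exact Or.inr ⟨iff_of_true (hsub hs) hl, hs⟩
        · exact Or.inl ⟨hs, hl⟩
      · rintro (⟨h1, -⟩ | ⟨-, h2⟩)
        · exact Or.inr h1
        · exact Or.inl h2
    · have hl : ¬ lowp S' (Sum.inr B) := hnot
      show s ∈ B \ S' ↔ _
      constructor
      · rintro ⟨h1, h2⟩
        exact Or.inr ⟨iff_of_false h2 hl, h1⟩
      · rintro (⟨-, h1⟩ | ⟨h1, h2⟩)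
        · exact absurd h1 hl
        · exact ⟨h2, fun hs => hl ((h1 : (s ∈ S') ↔ _).mp hs)⟩
  · -- inr A, inl t
    obtain ⟨hA, hAne⟩ := inr_mem_Vprime_iff.mp hu
    rw [gmap_inl, gmap_inr]
    rcases gset_cases hLlin hS' hA with ⟨hsub, hne, hgs⟩ | ⟨hsub, hnot, hgs⟩ <;> rw [hgs]
    · have hl : lowp S' (Sum.inr A) := ⟨hsub, hne⟩
      show t ∉ A ∪ S'ᶜ ↔ _
      constructor
      · intro hne'
        have h1 : t ∉ A := fun h => hne' (Or.inl h)
        have h2 : t ∈ S' := by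
          by_contra h
          exact hne' (Or.inr h)
        exact Or.inr ⟨iff_of_true hl h2, h1⟩
      · rintro (⟨h1, -⟩ | ⟨h1, h2⟩)
        · exact absurd hl h1
        · rintro (h | h)
          · exact h2 h
          · exact h ((h1 : _ ↔ (t ∈ S')).mp hl)
    · have hl : ¬ lowp S' (Sum.inr A) := hnot
      show t ∉ A \ S' ↔ _
      constructor
      · intro hne'
        by_cases ht : t ∈ S'
        · exact Or.inl ⟨hl, ht⟩
        · refine Or.inr ⟨iff_of_false hl ht, fun hA' => hne' ⟨hA', ht⟩⟩
      · rintro (⟨-, h1⟩ | ⟨h1, h2⟩)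
        · exact fun h => h.2 h1
        · exact fun h => h2 h.1
  · -- inr A, inr B
    obtain ⟨hA, hAne⟩ := inr_mem_Vprime_iff.mp hu
    obtain ⟨hB, hBne⟩ := inr_mem_Vprime_iff.mp hv
    rw [gmap_inr, gmap_inr]
    rcases gset_cases hLlin hS' hA with ⟨hs1, hn1, hg1⟩ | ⟨hs1, hn1, hg1⟩ <;>
      rcases gset_cases hLlin hS' hB with ⟨hs2, hn2, hg2⟩ | ⟨hs2, hn2, hg2⟩ <;>
      rw [hg1, hg2]
    · have hlA : lowp S' (Sum.inr A) := ⟨hs1, hn1⟩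
      have hlB : lowp S' (Sum.inr B) := ⟨hs2, hn2⟩
      show A ∪ S'ᶜ ⊆ B ∪ S'ᶜ ↔ _
      constructor
      · intro h
        refine Or.inr ⟨iff_of_true hlA hlB, fun x hx => ?_⟩
        exact (h (Or.inl hx)).resolve_right (fun hc => hc (hs1 hx))
      · rintro (⟨h1, -⟩ | ⟨-, h2⟩)
        · exact absurd hlA h1
        · exact Set.union_subset_union_left _ h2
    · have hlA : lowp S' (Sum.inr A) := ⟨hs1, hn1⟩
      have hlB : ¬ lowp S' (Sum.inr B) := hn2
      show A ∪ S'ᶜ ⊆ B \ S' ↔ _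
      constructor
      · intro h
        exfalso
        apply hBne
        apply Set.eq_univ_of_forall
        intro x
        by_cases hx : x ∈ S'
        · exact hs2 hx
        · exact (h (Or.inr hx)).1
      · rintro (⟨h1, h2⟩ | ⟨h1, -⟩)
        · exact absurd h2 hlB
        · exact absurd hlA (fun hc => hlB ((h1 : _ ↔ _).mp hc))
    · have hlA : ¬ lowp S' (Sum.inr A) := hn1
      have hlB : lowp S' (Sum.inr B) := ⟨hs2, hn2⟩
      show A \ S' ⊆ B ∪ S'ᶜ ↔ _
      constructor
      · intro _
        exact Or.inl ⟨hlA, hlB⟩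
      · intro _
        intro x hx
        exact Or.inr hx.2
    · have hlA : ¬ lowp S' (Sum.inr A) := hn1
      have hlB : ¬ lowp S' (Sum.inr B) := hn2
      show A \ S' ⊆ B \ S' ↔ _
      constructor
      · intro h
        refine Or.inr ⟨iff_of_false hlA hlB, fun x hx => ?_⟩
        by_cases hxS : x ∈ S'
        · exact hs2 hxS
        · exact (h ⟨hx, hxS⟩).1
      · rintro (⟨-, h1⟩ | ⟨-, h2⟩)
        · exact absurd h1 hlB
        · exact fun x hx => ⟨h2 hx.1, hx.2⟩

lemma gmap_mapsTo (hLlin : IsLinRel lL) (hS' : RInitSeg lL S')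
    (hKdef : ∀ x y, lK x y ↔ ((x ∉ S' ∧ y ∈ S') ∨ ((x ∈ S' ↔ y ∈ S') ∧ lL x y))) :
    Set.MapsTo (gmap S') (Vprime lL) (Vprime lK) := by
  rintro u (⟨s, rfl⟩ | ⟨A, hA, hAne, rfl⟩)
  · exact inl_mem_Vprime s
  · rw [gmap_inr]
    obtain ⟨h1, h2⟩ := gset_mem hLlin hS' hKdef hA hAne
    exact inr_mem_Vprime h1 h2

lemma gmap_injOn (hLlin : IsLinRel lL) (hS' : RInitSeg lL S') :
    Set.InjOn (gmap S') (Vprime lL) := by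
  intro u hu v hv h
  rcases u with s | A <;> rcases v with t | B
  · exact h
  · simp [gmap_inl, gmap_inr] at h
  · simp [gmap_inl, gmap_inr] at h
  · obtain ⟨hA, hAne⟩ := inr_mem_Vprime_iff.mp hu
    obtain ⟨hB, hBne⟩ := inr_mem_Vprime_iff.mp hv
    rw [gmap_inr, gmap_inr, Sum.inr.injEq] at h
    rw [Sum.inr.injEq]
    rcases gset_cases hLlin hS' hA with ⟨hs1, hn1, hg1⟩ | ⟨hs1, hn1, hg1⟩ <;>
      rcases gset_cases hLlin hS' hB with ⟨hs2, hn2, hg2⟩ | ⟨hs2, hn2, hg2⟩ <;>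
      rw [hg1, hg2] at h
    · apply Set.Subset.antisymm
      · intro x hx
        exact ((h ▸ (Or.inl hx : x ∈ A ∪ S'ᶜ)) : x ∈ B ∪ S'ᶜ).resolve_right
          (fun hc => hc (hs1 hx))
      · intro x hx
        exact ((h ▸ (Or.inl hx : x ∈ B ∪ S'ᶜ) : x ∈ A ∪ S'ᶜ)).resolve_right
          (fun hc => hc (hs2 hx))
    · exfalso
      apply hBne
      apply Set.eq_univ_of_forall
      intro x
      by_cases hx : x ∈ S'
      · exact hs2 hx
      · exact ((h ▸ (Or.inr hx : x ∈ A ∪ S'ᶜ)) : x ∈ B \ S').1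
    · exfalso
      apply hAne
      apply Set.eq_univ_of_forall
      intro x
      by_cases hx : x ∈ S'
      · exact hs1 hx
      · exact ((h ▸ (Or.inr hx : x ∈ B ∪ S'ᶜ)) : x ∈ A \ S').1
    · apply Set.Subset.antisymm
      · intro x hx
        by_cases hxS : x ∈ S'
        · exact hs2 hxS
        · exact ((h ▸ (⟨hx, hxS⟩ : x ∈ A \ S')) : x ∈ B \ S').1
      · intro x hx
        by_cases hxS : x ∈ S'
        · exact hs1 hxS
        · exact ((h ▸ (⟨hx, hxS⟩ : x ∈ B \ S')) : x ∈ A \ S').1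

lemma complS'_initseg_K
    (hKdef : ∀ x y, lK x y ↔ ((x ∉ S' ∧ y ∈ S') ∨ ((x ∈ S' ↔ y ∈ S') ∧ lL x y))) :
    RInitSeg lK S'ᶜ := by
  intro x hx t ht
  rcases (hKdef t x).mp ht with ⟨h1, h2⟩ | ⟨h1, h2⟩
  · exact h1
  · exact fun hts => hx (h1.mp hts)

lemma gmap_surjOn (hLlin : IsLinRel lL) (hKlin : IsLinRel lK) (hS' : RInitSeg lL S')
    (hKdef : ∀ x y, lK x y ↔ ((x ∉ S' ∧ y ∈ S') ∨ ((x ∈ S' ↔ y ∈ S') ∧ lL x y))) :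
    Set.SurjOn (gmap S') (Vprime lL) (Vprime lK) := by
  rintro w (⟨s, rfl⟩ | ⟨B, hB, hBne, rfl⟩)
  · exact ⟨Sum.inl s, inl_mem_Vprime s, rfl⟩
  · by_cases hc : S'ᶜ ⊆ B
    · -- preimage is B ∩ S'
      have hini : RInitSeg lL (B ∩ S') := by
        intro x hx t ht
        have htS : t ∈ S' := hS' x hx.2 t ht
        exact ⟨hB x hx.1 t ((hKdef t x).mpr (Or.inr ⟨iff_of_true htS hx.2, ht⟩)), htS⟩
      have hneu : B ∩ S' ≠ Set.univ := by
        intro he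
        apply hBne
        apply Set.eq_univ_of_univ_subset
        rw [← he]
        exact Set.inter_subset_left
      refine ⟨Sum.inr (B ∩ S'), inr_mem_Vprime hini hneu, ?_⟩
      rw [gmap_inr, Sum.inr.injEq]
      have hcond : B ∩ S' ⊆ S' ∧ B ∩ S' ≠ S' := by
        refine ⟨Set.inter_subset_right, fun heq => hBne ?_⟩
        apply Set.eq_univ_of_forall
        intro x
        by_cases hx : x ∈ S'
        · have hx2 : x ∈ B ∩ S' := by rw [heq]; exact hx
          exact hx2.1
        · exact hc hx
      rw [gset, if_pos hcond]
      apply Set.Subset.antisymm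
      · rintro x (hx | hx)
        · exact hx.1
        · exact hc hx
      · intro x hx
        by_cases hxS : x ∈ S'
        · exact Or.inl ⟨hx, hxS⟩
        · exact Or.inr hxS
    · -- preimage is B ∪ S'
      have hBsub : B ⊆ S'ᶜ :=
        (initseg_total hKlin (complS'_initseg_K hKdef) hB).resolve_left hc
      have hini : RInitSeg lL (B ∪ S') := by
        intro x hx t ht
        by_cases htS : t ∈ S'
        · exact Or.inr htS
        · rcases hx with hx | hx
          · exact Or.inl (hB x hx t ((hKdef t x).mpr
              (Or.inr ⟨iff_of_false htS (hBsub hx), ht⟩)))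
          · exact absurd (hS' x hx t ht) htS
      have hneu : B ∪ S' ≠ Set.univ := by
        intro he
        apply hc
        intro x hx
        exact ((he ▸ Set.mem_univ x : x ∈ B ∪ S')).resolve_right hx
      refine ⟨Sum.inr (B ∪ S'), inr_mem_Vprime hini hneu, ?_⟩
      rw [gmap_inr, Sum.inr.injEq]
      have hcond : ¬(B ∪ S' ⊆ S' ∧ B ∪ S' ≠ S') :=
        fun ⟨h1, h2⟩ => h2 (subset_antisymm h1 Set.subset_union_right)
      rw [gset, if_neg hcond]
      apply Set.Subset.antisymm
      · rintro x ⟨hx | hx, hxn⟩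
        · exact hx
        · exact absurd hx hxn
      · intro x hx
        exact ⟨Or.inl hx, hBsub hx⟩

lemma mem_ZL {le : S → S → Prop} {a b c : S ⊕ Set S} (ha : a ∈ Vprime le)
    (hb : b ∈ Vprime le) (hc : c ∈ Vprime le) :
    ((a, b, c) ∈ ZL le) ↔ (a, b, c) ∈ cycOfLin (Dple le) := by
  simp [ZL, inducedCycOrder, Set.mem_setOf_eq, ha, hb, hc]

lemma gmap_pres (hLlin : IsLinRel lL) (hS' : RInitSeg lL S')
    (hKdef : ∀ x y, lK x y ↔ ((x ∉ S' ∧ y ∈ S') ∨ ((x ∈ S' ↔ y ∈ S') ∧ lL x y)))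
    {a b c : S ⊕ Set S} (ha : a ∈ Vprime lL) (hb : b ∈ Vprime lL) (hc : c ∈ Vprime lL) :
    ((a, b, c) ∈ ZL lL ↔ (gmap S' a, gmap S' b, gmap S' c) ∈ ZL lK) := by
  have hma := gmap_mapsTo hLlin hS' hKdef ha
  have hmb := gmap_mapsTo hLlin hS' hKdef hb
  have hmc := gmap_mapsTo hLlin hS' hKdef hc
  rw [mem_ZL ha hb hc, mem_ZL hma hmb hmc]
  rw [rot_cyc (Dple lL) (lowp S') a b c (Dple_total hLlin ha hb)
    (Dple_total hLlin hb hc) (Dple_total hLlin ha hc)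
    (fun h1 h2 => lowp_dc hLlin hS' ha hb h1 h2)
    (fun h1 h2 => lowp_dc hLlin hS' hb ha h1 h2)
    (fun h1 h2 => lowp_dc hLlin hS' hb hc h1 h2)
    (fun h1 h2 => lowp_dc hLlin hS' hc hb h1 h2)
    (fun h1 h2 => lowp_dc hLlin hS' ha hc h1 h2)
    (fun h1 h2 => lowp_dc hLlin hS' hc ha h1 h2)]
  have e : ∀ u v : S ⊕ Set S, u ∈ Vprime lL → v ∈ Vprime lL →
      (relLt (fun u v => (¬ lowp S' u ∧ lowp S' v) ∨
          ((lowp S' u ↔ lowp S' v) ∧ Dple lL u v)) u v ↔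
        relLt (Dple lK) (gmap S' u) (gmap S' v)) := by
    intro u v hu hv
    unfold relLt
    apply and_congr (dple_gmap_iff hLlin hS' hKdef hu hv).symm
    constructor
    · intro hne heq
      exact hne (gmap_injOn hLlin hS' hu hv heq)
    · intro hne heq
      exact hne (by rw [heq])
  simp only [cycOfLin, Set.mem_setOf_eq]
  exact or_congr (and_congr (e a b ha hb) (e b c hb hc))
    (or_congr (and_congr (e b c hb hc) (e c a hc ha))
      (and_congr (e c a hc ha) (e a b ha hb)))

lemma mem_ZL_slt {C : Set S} (hC : RInitSeg lK C) (hCne : C ≠ Set.univ) (s t : S) :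
    ((Sum.inl s, Sum.inr C, Sum.inl t) ∈ ZL lK) ↔
      ((s ∈ C ∧ t ∉ C) ∨ (t ∉ C ∧ (lK t s ∧ t ≠ s)) ∨ ((lK t s ∧ t ≠ s) ∧ s ∈ C)) := by
  rw [mem_ZL (inl_mem_Vprime s) (inr_mem_Vprime hC hCne) (inl_mem_Vprime t)]
  simp only [cycOfLin, relLt, Set.mem_setOf_eq]
  have h1 : Dple lK (Sum.inl s) (Sum.inr C) = (s ∈ C) := rfl
  have h2 : Dple lK (Sum.inr C) (Sum.inl t) = (t ∉ C) := rfl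
  have h3 : Dple lK (Sum.inl t) (Sum.inl s) = lK t s := rfl
  rw [h1, h2, h3]
  have n1 : (Sum.inl s ≠ (Sum.inr C : S ⊕ Set S)) := by simp
  have n2 : ((Sum.inr C : S ⊕ Set S) ≠ Sum.inl t) := by simp
  have n3 : ((Sum.inl t : S ⊕ Set S) ≠ Sum.inl s) ↔ t ≠ s := by simp
  rw [n3]
  simp only [eq_true n1, eq_true n2, and_true]

lemma seg_half (hKlin : IsLinRel lK) {B B' : Set S} (hB : RInitSeg lK B)
    (hBne : B ≠ Set.univ)
    (H : ∀ s t : S,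
      ((s ∈ B ∧ t ∉ B) ∨ (t ∉ B ∧ (lK t s ∧ t ≠ s)) ∨ ((lK t s ∧ t ≠ s) ∧ s ∈ B)) →
      ((s ∈ B' ∧ t ∉ B') ∨ (t ∉ B' ∧ (lK t s ∧ t ≠ s)) ∨ ((lK t s ∧ t ≠ s) ∧ s ∈ B'))) :
    B ⊆ B' := by
  intro s hs
  by_contra hs'
  obtain ⟨t, ht⟩ := (Set.ne_univ_iff_exists_notMem B).mp hBne
  have hst : lK s t := (hKlin.2.2.2 s t).resolve_right (fun h => ht (hB s hs t h))
  rcases H s t (Or.inl ⟨hs, ht⟩) with ⟨h1, -⟩ | ⟨-, h2, h3⟩ | ⟨⟨h2, h3⟩, h1⟩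
  · exact hs' h1
  · exact h3 (hKlin.2.1 t s h2 hst)
  · exact hs' h1

end Aux12

/-- For cuts `L` and `K` of `Z` with `K = (L ↾ (S \ S')) ⊕ (L ↾ S')` for an initial
segment `S'` of `L`, the map `gmap S'` is the unique isomorphism of `Z(L)` and `Z(K)`
fixing `S` pointwise. -/
theorem stmt12 {S : Type*} (Z : Set (S × S × S)) (hZ : IsCyclicOrder Z)
    (h2 : ∃ a b : S, a ≠ b)
    (lL lK : S → S → Prop) (hL : IsCut Z lL) (hK : IsCut Z lK)
    (S' : Set S) (hS' : RInitSeg lL S')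
    (hKdef : ∀ x y, lK x y ↔ ((x ∉ S' ∧ y ∈ S') ∨ ((x ∈ S' ↔ y ∈ S') ∧ lL x y))) :
    Set.BijOn (gmap S') (Vprime lL) (Vprime lK) ∧
    (∀ a ∈ Vprime lL, ∀ b ∈ Vprime lL, ∀ c ∈ Vprime lL,
      ((a, b, c) ∈ ZL lL ↔ (gmap S' a, gmap S' b, gmap S' c) ∈ ZL lK)) ∧
    (∀ s : S, gmap S' (Sum.inl s) = Sum.inl s) ∧
    (∀ h : S ⊕ Set S → S ⊕ Set S,
      Set.BijOn h (Vprime lL) (Vprime lK) →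
      (∀ a ∈ Vprime lL, ∀ b ∈ Vprime lL, ∀ c ∈ Vprime lL,
        ((a, b, c) ∈ ZL lL ↔ (h a, h b, h c) ∈ ZL lK)) →
      (∀ s : S, h (Sum.inl s) = Sum.inl s) →
      Set.EqOn h (gmap S') (Vprime lL)) := by
  obtain ⟨hLlin, -⟩ := hL
  obtain ⟨hKlin, -⟩ := hK
  have hbij : Set.BijOn (gmap S') (Vprime lL) (Vprime lK) :=
    ⟨gmap_mapsTo hLlin hS' hKdef, gmap_injOn hLlin hS',
      gmap_surjOn hLlin hKlin hS' hKdef⟩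
  refine ⟨hbij, fun a ha b hb c hc => gmap_pres hLlin hS' hKdef ha hb hc,
    fun s => rfl, ?_⟩
  intro h hhbij hhpres hhfix u hu
  rcases hu with ⟨s, rfl⟩ | ⟨A, hA, hAne, rfl⟩
  · show h (Sum.inl s) = gmap S' (Sum.inl s)
    rw [hhfix s, gmap_inl]
  · show h (Sum.inr A) = gmap S' (Sum.inr A)
    have hu' : Sum.inr A ∈ Vprime lL := inr_mem_Vprime hA hAne
    have hmem := hhbij.mapsTo hu'
    rcases hmem with ⟨s, hsx⟩ | ⟨B, hBinit, hBne, heq⟩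
    · exfalso
      have h1 : h (Sum.inl s) = h (Sum.inr A) := by rw [hhfix s, hsx]
      have h2 := hhbij.injOn (inl_mem_Vprime s) hu' h1
      simp at h2
    · obtain ⟨hg1, hg2⟩ := gset_mem hLlin hS' hKdef hA hAne
      have key : ∀ s t : S,
          ((s ∈ B ∧ t ∉ B) ∨ (t ∉ B ∧ (lK t s ∧ t ≠ s)) ∨ ((lK t s ∧ t ≠ s) ∧ s ∈ B)) ↔
          ((s ∈ gset S' A ∧ t ∉ gset S' A) ∨ (t ∉ gset S' A ∧ (lK t s ∧ t ≠ s)) ∨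
            ((lK t s ∧ t ≠ s) ∧ s ∈ gset S' A)) := by
        intro s t
        have h1 := hhpres (Sum.inl s) (inl_mem_Vprime s) (Sum.inr A) hu'
          (Sum.inl t) (inl_mem_Vprime t)
        rw [hhfix s, hhfix t, heq] at h1
        have h2 := gmap_pres hLlin hS' hKdef (inl_mem_Vprime s) hu' (inl_mem_Vprime t)
        rw [gmap_inl, gmap_inl, gmap_inr] at h2
        rw [← mem_ZL_slt hBinit hBne s t, ← mem_ZL_slt hg1 hg2 s t]
        exact (h1.symm.trans h2)
      have hBeq : B = gset S' A :=
        Set.Subset.antisymm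
          (seg_half hKlin hBinit hBne (fun s t => (key s t).mp))
          (seg_half hKlin hg1 hg2 (fun s t => (key s t).mpr))
      rw [heq, gmap_inr, hBeq]
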